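/- Let p be buyer-optimal market clearing prices with profits q, and M a maximum-value perfect matching. Then for every buyer j, v*_{-j} = v* - q_j, where v*_{-j} is the maximum value of a matching when buyer j is replaced by a dummy buyer with zero valuations (equivalently, the maximum value of a matching of I into J \ {j} of size n-1). -/

import Mathlib

open Finset

noncomputable section

/-- Profit of buyer `j` at prices `p`: `max_i (v i j - p i)`. -/
def profit {n : ℕ} (v : Fin n → Fin n → ℝ) (p : Fin n → ℝ) (j : Fin n) : ℝ :=
  ⨆ i, v i j - p i

/-- Value of a perfect matching, where buyer `j` is assigned item `M j`. -/
def mval {n : ℕ} (v : Fin n → Fin n → ℝ) (M : Fin n ≃ Fin n) : ℝ :=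
  ∑ j, v (M j) j

/-- Maximum value of a perfect matching. -/
def vstar {n : ℕ} (v : Fin n → Fin n → ℝ) : ℝ :=
  ⨆ M : Fin n ≃ Fin n, mval v M

/-- `M` witnesses that `p` is market clearing: every buyer gets a profit-maximizing item. -/
def ClearingWitness {n : ℕ} (v : Fin n → Fin n → ℝ) (p : Fin n → ℝ) (M : Fin n ≃ Fin n) : Prop :=
  ∀ j i', v i' j - p i' ≤ v (M j) j - p (M j)

/-- `p` is market clearing: some perfect matching assigns every buyer an item
maximizing her profit `v i j - p i`. -/
def IsMC {n : ℕ} (v : Fin n → Fin n → ℝ) (p : Fin n → ℝ) : Prop :=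
  ∃ M : Fin n ≃ Fin n, ClearingWitness v p M

/-- Buyer-optimal market clearing prices: nonnegative, market clearing, and of
minimum total price among all nonnegative market clearing price vectors. -/
def BuyerOptimal {n : ℕ} (v : Fin n → Fin n → ℝ) (p : Fin n → ℝ) : Prop :=
  (∀ i, 0 ≤ p i) ∧ IsMC v p ∧
    ∀ p' : Fin n → ℝ, (∀ i, 0 ≤ p' i) → IsMC v p' → ∑ i, p i ≤ ∑ i, p' i

/-- `v*_{-j}`: maximum matching value when buyer `j` is replaced by a dummy
buyer with zero valuations. -/
def vstarDummy {n : ℕ} (v : Fin n → Fin n → ℝ) (j : Fin n) : ℝ :=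
  ⨆ M : Fin n ≃ Fin n, ∑ j' ∈ Finset.univ.erase j, v (M j') j'

/-- `v*_{-j}^{-i}`: maximum value of a perfect matching between `I \ {i}` and `J \ {j}`. -/
def vstarRemove {n : ℕ} (v : Fin n → Fin n → ℝ) (i j : Fin n) : ℝ :=
  ⨆ M : {i' : Fin n // i' ≠ i} ≃ {j' : Fin n // j' ≠ j},
    ∑ j' : {j' : Fin n // j' ≠ j}, v (M.symm j') j'

/-- Buyer `j` is joined, by an `M`-alternating path in the equality graph starting and
ending with a matching edge (`j = j_0, i_0 = M j_0, j_1, i_1 = M j_1, …, i_k = M j_k`),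
to an item of price zero. -/
def AltPathZero {n : ℕ} (v : Fin n → Fin n → ℝ) (p : Fin n → ℝ) (M : Fin n ≃ Fin n)
    (j : Fin n) : Prop :=
  ∃ k : ℕ, ∃ js : Fin (k + 1) → Fin n,
    js 0 = j ∧
    (∀ t : Fin k,
      p (M (js t.castSucc)) + profit v p (js t.succ) = v (M (js t.castSucc)) (js t.succ)) ∧
    p (M (js (Fin.last k))) = 0

/-- A (partial) matching given as a set of item-buyer pairs: pairwise non-incident edges. -/
def IsMatching {n : ℕ} (Mset : Finset (Fin n × Fin n)) : Prop :=
  ∀ e ∈ Mset, ∀ e' ∈ Mset, e ≠ e' → e.1 ≠ e'.1 ∧ e.2 ≠ e'.2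

/-- All edges of `Mset` are equality edges w.r.t. the dual solution `(p, q)`. -/
def InEqualityGraph {n : ℕ} (v : Fin n → Fin n → ℝ) (p q : Fin n → ℝ)
    (Mset : Finset (Fin n × Fin n)) : Prop :=
  ∀ e ∈ Mset, p e.1 + q e.2 = v e.1 e.2

/-- Item `i` is reachable from buyer `j` along an `Mset`-alternating path of equality
edges: `j = j_0, i_0, j_1, i_1, …, i_k = i`, where each `(i_t, j_t)` is a non-matching
equality edge and each `(i_t, j_{t+1})` is a matching edge. -/
def ReachFrom {n : ℕ} (v : Fin n → Fin n → ℝ) (p q : Fin n → ℝ)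
    (Mset : Finset (Fin n × Fin n)) (j i : Fin n) : Prop :=
  ∃ k : ℕ, ∃ is js : Fin (k + 1) → Fin n,
    js 0 = j ∧ is (Fin.last k) = i ∧
    (∀ t, p (is t) + q (js t) = v (is t) (js t) ∧ (is t, js t) ∉ Mset) ∧
    (∀ t : Fin k, (is t.castSucc, js t.succ) ∈ Mset)

/-!
For market clearing prices `p` with profits `q`, every clearing matching has value `∑ p + ∑ q`,
which bounds the value of every matching, so `v* = ∑ p + ∑ q`. Buyer-optimality forces every
buyer `j` to be joined by an alternating path of equality edges to an item of price `0`: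
otherwise lowering the prices of all items reached by such paths keeps `p` market clearing and
decreases `∑ p`. Rotating the matching along that path shows that `p` is still market clearing
once buyer `j` is replaced by a dummy buyer, whose profit is then `0`; the same duality in that
market gives `v*_{-j} = ∑ p + ∑ q - q j = v* - q j`.
-/

theorem List.exists_nodup_isChain_cons_of_relationReflTransGen {α : Type*} [DecidableEq α]
    {r : α → α → Prop} {a b : α} (h : Relation.ReflTransGen r a b) :
    ∃ l : List α, (a :: l).Nodup ∧ (a :: l).IsChain r ∧ (a :: l).getLast (cons_ne_nil a l) = b := by
  induction h using Relation.ReflTransGen.head_induction_on with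
  | refl => exact ⟨[], nodup_singleton b, isChain_singleton b, rfl⟩
  | @head a c hac _ ih =>
    obtain ⟨l, hnd, hch, hlast⟩ := ih
    by_cases ha : a ∈ c :: l
    · obtain ⟨s, t, hst⟩ := append_of_mem ha
      have hsuf : a :: t <:+ c :: l := hst ▸ suffix_append s (a :: t)
      refine ⟨t, hnd.sublist hsuf.sublist, hch.suffix hsuf, ?_⟩
      rw [← hlast]
      simp only [hst, getLast_append_of_ne_nil _ (cons_ne_nil a t)]
    · exact ⟨c :: l, nodup_cons.2 ⟨ha, hnd⟩, isChain_cons_cons.2 ⟨hac, hch⟩, by simpa using hlast⟩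

theorem Relation.ReflTransGen.exists_perm_apply_eq {α : Type*} [DecidableEq α]
    {r : α → α → Prop} {a b : α} (h : Relation.ReflTransGen r a b) :
    ∃ σ : Equiv.Perm α, σ a = b ∧ ∀ x ≠ a, σ x = x ∨ r (σ x) x := by
  obtain ⟨l, hnd, hch, rfl⟩ := List.exists_nodup_isChain_cons_of_relationReflTransGen h
  -- `σ` moves every vertex of the simple path `a :: l` back to its predecessor
  refine ⟨(a :: l).formPerm.symm, ?_, fun x hxa => ?_⟩
  · rw [Equiv.symm_apply_eq, List.formPerm_apply_getLast]
  by_cases hx : x ∈ a :: l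
  · obtain ⟨_ | s, hs, rfl⟩ := List.mem_iff_getElem.1 hx
    · exact absurd rfl hxa
    have hσ : (a :: l).formPerm.symm (a :: l)[s + 1] = (a :: l)[s] := by
      rw [Equiv.symm_apply_eq, List.formPerm_apply_lt_getElem _ hnd s hs]
    rw [hσ]
    exact Or.inr (List.isChain_iff_getElem.1 hch s hs)
  · exact Or.inl (by rw [Equiv.symm_apply_eq, List.formPerm_apply_of_notMem hx])

theorem Finset.exists_pos_forall_le {ι α : Type*} [Semiring α] [LinearOrder α]
    [IsStrictOrderedRing α] (s : Finset ι) (f : ι → α) (hf : ∀ x ∈ s, 0 < f x) :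
    ∃ ε > 0, ∀ x ∈ s, ε ≤ f x := by
  rcases s.eq_empty_or_nonempty with rfl | hs
  · exact ⟨1, one_pos, by simp⟩
  · obtain ⟨x, hx, hmin⟩ := s.exists_min_image f hs
    exact ⟨f x, hf x hx, hmin⟩

section Market

variable {n : ℕ} {v : Fin n → Fin n → ℝ} {p : Fin n → ℝ} {M : Fin n ≃ Fin n}

theorem le_profit (v : Fin n → Fin n → ℝ) (p : Fin n → ℝ) (i j : Fin n) :
    v i j - p i ≤ profit v p j :=
  have : Nonempty (Fin n) := ⟨j⟩
  le_ciSup (f := fun i => v i j - p i) (Set.finite_range _).bddAbove i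

theorem ClearingWitness.profit_eq (hM : ClearingWitness v p M) (j : Fin n) :
    profit v p j = v (M j) j - p (M j) :=
  have : Nonempty (Fin n) := ⟨j⟩
  le_antisymm (ciSup_le (hM j)) (le_profit v p (M j) j)

theorem mval_le_sum_add_sum_profit (v : Fin n → Fin n → ℝ) (p : Fin n → ℝ) (N : Fin n ≃ Fin n) :
    mval v N ≤ ∑ i, p i + ∑ j, profit v p j := by
  rw [← Equiv.sum_comp N p, ← sum_add_distrib]
  exact sum_le_sum fun j _ => by linarith [le_profit v p (N j) j]

theorem ClearingWitness.mval_eq (hM : ClearingWitness v p M) :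
    mval v M = ∑ i, p i + ∑ j, profit v p j := by
  rw [← Equiv.sum_comp M p, ← sum_add_distrib]
  exact sum_congr rfl fun j _ => by rw [hM.profit_eq]; ring

theorem IsMC.vstar_eq (hp : IsMC v p) : vstar v = ∑ i, p i + ∑ j, profit v p j := by
  obtain ⟨M, hM⟩ := hp
  refine le_antisymm (ciSup_le (mval_le_sum_add_sum_profit v p)) ?_
  rw [← hM.mval_eq]
  exact le_ciSup (Set.finite_range _).bddAbove M

def lowerPrices (p : Fin n → ℝ) (S : Finset (Fin n)) (ε : ℝ) : Fin n → ℝ :=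
  fun i => p i - if i ∈ S then ε else 0

theorem sum_lowerPrices (p : Fin n → ℝ) (S : Finset (Fin n)) (ε : ℝ) :
    ∑ i, lowerPrices p S ε i = ∑ i, p i - #S * ε := by
  simp [lowerPrices, sum_sub_distrib, sum_ite_mem]

theorem ClearingWitness.lowerPrices {S : Finset (Fin n)} {ε : ℝ} (hM : ClearingWitness v p M)
    (hε : 0 ≤ ε) (hslack : ∀ b, M b ∉ S → ∀ i ∈ S, ε ≤ p i + profit v p b - v i b) :
    ClearingWitness v (lowerPrices p S ε) M := by
  intro b i
  have hb := hM b i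
  have hprofit := hM.profit_eq b
  by_cases hbS : M b ∈ S <;> by_cases hiS : i ∈ S
  · simp only [_root_.lowerPrices, hbS, hiS, if_true]; linarith
  · simp only [_root_.lowerPrices, hbS, hiS, if_true, if_false]; linarith
  · simp only [_root_.lowerPrices, hbS, hiS, if_true, if_false]; linarith [hslack b hbS i hiS]
  · simp only [_root_.lowerPrices, hbS, hiS, if_false]; linarith

/-- `(M a, c)` is an equality edge, so an `M`-alternating path can pass from buyer `a` to
buyer `c`. -/
def AltStep (v : Fin n → Fin n → ℝ) (p : Fin n → ℝ) (M : Fin n ≃ Fin n) (a c : Fin n) : Prop :=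
  p (M a) + profit v p c = v (M a) c

theorem slack_pos_of_not_altStep {a c : Fin n} (h : ¬ AltStep v p M a c) :
    0 < p (M a) + profit v p c - v (M a) c := by
  have := le_profit v p (M a) c
  exact lt_of_le_of_ne (by linarith) fun h' => h (by unfold AltStep; linarith)

theorem BuyerOptimal.exists_reflTransGen_altStep_price_eq_zero (hopt : BuyerOptimal v p)
    (hM : ClearingWitness v p M) (j : Fin n) :
    ∃ b, Relation.ReflTransGen (AltStep v p M) j b ∧ p (M b) = 0 := by
  classical
  by_contra! hpos
  set R := univ.filter (Relation.ReflTransGen (AltStep v p M) j)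
  have hR : ∀ b, b ∈ R ↔ Relation.ReflTransGen (AltStep v p M) j b := by simp [R]
  obtain ⟨ε₁, hε₁, hle₁⟩ := R.exists_pos_forall_le (fun b => p (M b)) fun b hb =>
    (hopt.1 _).lt_of_ne' (hpos b ((hR b).1 hb))
  obtain ⟨ε₂, hε₂, hle₂⟩ := (R ×ˢ Rᶜ).exists_pos_forall_le
      (fun ab => p (M ab.1) + profit v p ab.2 - v (M ab.1) ab.2) fun ⟨a, b⟩ hab => by
    obtain ⟨ha, hb⟩ := mem_product.1 hab
    exact slack_pos_of_not_altStep fun h => mem_compl.1 hb ((hR b).2 (((hR a).1 ha).tail h))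
  set ε := min ε₁ ε₂
  set S := R.map M.toEmbedding
  have hS : ∀ b, M b ∈ S ↔ b ∈ R := fun b => mem_map' M.toEmbedding
  have hclear : ClearingWitness v (lowerPrices p S ε) M := by
    refine hM.lowerPrices (by positivity) fun b hb i hi => ?_
    obtain ⟨a, ha, rfl⟩ := mem_map.1 hi
    exact (min_le_right _ _).trans
      (hle₂ (a, b) (mem_product.2 ⟨ha, mem_compl.2 fun h => hb ((hS b).2 h)⟩))
  have hnonneg : ∀ i, 0 ≤ lowerPrices p S ε i := by
    intro i
    by_cases hi : i ∈ S
    · have hpi := hle₁ _ (mem_map_equiv.1 hi)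
      rw [Equiv.apply_symm_apply] at hpi
      simp only [lowerPrices, if_pos hi]
      linarith [min_le_left ε₁ ε₂]
    · simpa [lowerPrices, hi] using hopt.1 i
  have hcard : (1 : ℝ) ≤ #S := by
    exact_mod_cast card_pos.2 ⟨M j, (hS j).2 ((hR j).2 .refl)⟩
  have hle := hopt.2.2 _ hnonneg ⟨M, hclear⟩
  rw [sum_lowerPrices] at hle
  nlinarith [lt_min hε₁ hε₂]

def dropBuyer (v : Fin n → Fin n → ℝ) (j : Fin n) : Fin n → Fin n → ℝ :=
  fun i => Function.update (v i) j 0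

theorem vstarDummy_eq_vstar_dropBuyer (v : Fin n → Fin n → ℝ) (j : Fin n) :
    vstarDummy v j = vstar (dropBuyer v j) := by
  refine iSup_congr fun N => ?_
  rw [mval, ← sum_erase (f := fun j' => dropBuyer v j (N j') j') (a := j) _ (by simp [dropBuyer])]
  exact sum_congr rfl fun j' hj' => by simp [dropBuyer, ne_of_mem_erase hj']

theorem profit_dropBuyer_of_ne {j j' : Fin n} (h : j' ≠ j) :
    profit (dropBuyer v j) p j' = profit v p j' := by
  simp [profit, dropBuyer, h]

theorem sum_profit_dropBuyer {j : Fin n} (h : profit (dropBuyer v j) p j = 0) :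
    ∑ j', profit (dropBuyer v j) p j' = ∑ j', profit v p j' - profit v p j := by
  rw [← add_sum_erase _ _ (mem_univ j), h, zero_add, ← sum_erase_eq_sub (mem_univ j)]
  exact sum_congr rfl fun j' hj' => profit_dropBuyer_of_ne (ne_of_mem_erase hj')

theorem BuyerOptimal.exists_clearingWitness_dropBuyer (hopt : BuyerOptimal v p) (j : Fin n) :
    ∃ N, ClearingWitness (dropBuyer v j) p N ∧ p (N j) = 0 := by
  classical
  obtain ⟨M, hM⟩ := hopt.2.1
  obtain ⟨b, hjb, hb⟩ := hopt.exists_reflTransGen_altStep_price_eq_zero hM j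
  obtain ⟨σ, hσj, hσ⟩ := hjb.exists_perm_apply_eq
  refine ⟨σ.trans M, fun j' i => ?_, by simpa [hσj] using hb⟩
  by_cases hj' : j' = j
  · subst hj'
    simp [dropBuyer, hσj, hb, hopt.1 i]
  simp only [dropBuyer, Function.update_of_ne hj', Equiv.trans_apply]
  rcases hσ j' hj' with hfix | hstep
  · rw [hfix]
    exact hM j' i
  · unfold AltStep at hstep
    linarith [le_profit v p i j']

end Market

theorem stmt_11_general (n : ℕ) (v : Fin n → Fin n → ℝ)
    (p : Fin n → ℝ) (hopt : BuyerOptimal v p)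
    (j : Fin n) :
    vstarDummy v j = vstar v - profit v p j := by
  obtain ⟨N, hN, hNj⟩ := hopt.exists_clearingWitness_dropBuyer j
  have hj : profit (dropBuyer v j) p j = 0 := by simp [hN.profit_eq, dropBuyer, hNj]
  rw [vstarDummy_eq_vstar_dropBuyer, IsMC.vstar_eq ⟨N, hN⟩, hopt.2.1.vstar_eq,
    sum_profit_dropBuyer hj]
  ring

/-- for buyer-optimal market clearing `p` with profits `q`,
`v*_{-j} = v* - q j` for every buyer `j`. -/
theorem stmt_11 (n : ℕ) (v : Fin n → Fin n → ℝ) (hv : ∀ i j, 0 ≤ v i j)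
    (p : Fin n → ℝ) (hopt : BuyerOptimal v p)
    (M : Fin n ≃ Fin n) (hMmax : mval v M = vstar v) (j : Fin n) :
    vstarDummy v j = vstar v - profit v p j :=
  stmt_11_general n v p hopt j

end
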